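/- arXiv:2412.01319 — 5 statements merged into one kernel-verified Lean document; each statement's English description precedes it below -/
import Mathlib

section
/- Let N₁, N₂, W₁, W₂ be positive integers and let τ, ρ ∈ ℂ with Im τ > 0 and Im ρ > 0. Then the following are equivalent. (i) There exist integers α, β, γ, δ, α′, β′, γ′, δ′ with αδ − βγ = 1 and α′δ′ − β′γ′ = 1 such that (N₁W₂/(N₂W₁))·τ = (ατ + β)/(γτ + δ) and (W₁W₂/(N₁N₂))·ρ = (α′ρ + β′)/(γ′ρ + δ′). (ii) There exist integers x₀, y₀, x₀′, y₀′ satisfying (N₂W₁)²x₀² − 2N₁N₂W₁W₂(Re τ)x₀y₀ + (N₁W₂)²|τ|²y₀² = N₁N₂W₁W₂ and (N₁N₂)²x₀′² − 2N₁N₂W₁W₂(Re ρ)x₀′y₀′ + (W₁W₂)²|ρ|²y₀′² = N₁N₂W₁W₂, such that the four real numbers z₀ = −(N₁W₂/(N₂W₁))|τ|²y₀, w₀ = −2(Re τ)y₀ + (N₂W₁/(N₁W₂))x₀, z₀′ = −(W₁W₂/(N₁N₂))|ρ|²y₀′, w₀′ = −2(Re ρ)y₀′ + (N₁N₂/(W₁W₂))x₀′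 are all integers. Moreover, in that case one may take α = x₀, β = z₀, γ = y₀, δ = w₀ and α′ = x₀′, β′ = z₀′, γ′ = y₀′, δ′ = w₀′. -/
/-!
A real quadratic `p X² + q X + r` vanishes at a non-real `τ` exactly when it is `p` times the
minimal polynomial `X² - 2 (Re τ) X + |τ|²` of `τ`. Clearing denominators in
`(a/b) τ = (xτ + z)/(yτ + w)` gives such a quadratic, so the equation pins down `z` and `w` in
terms of `x` and `y`; substituting them, `a b (x w - z y)` is the binary quadratic form of (ii).
-/

namespace Complex

theorem sq_sub_two_re_mul_add_sq_norm (τ : ℂ) : τ ^ 2 - 2 * τ.re * τ + ‖τ‖ ^ 2 = 0 := by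
  rw [← ofReal_pow, Complex.sq_norm, normSq_apply]
  apply Complex.ext <;> simp [sq] <;> ring

theorem ofReal_mul_add_ofReal_eq_zero_iff {τ : ℂ} (hτ : τ.im ≠ 0) {c d : ℝ} :
    (c : ℂ) * τ + d = 0 ↔ c = 0 ∧ d = 0 := by
  constructor
  · intro h
    have hc : c = 0 := by simpa [hτ] using congrArg im h
    subst hc
    simpa using h
  · rintro ⟨rfl, rfl⟩
    simp

theorem ofReal_quadratic_eq_zero_iff {τ : ℂ} (hτ : τ.im ≠ 0) {p q r : ℝ} :
    (p : ℂ) * τ ^ 2 + q * τ + r = 0 ↔ q = -2 * τ.re * p ∧ r = ‖τ‖ ^ 2 * p := by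
  have hsplit : (p : ℂ) * τ ^ 2 + q * τ + r
      = ((q + 2 * τ.re * p : ℝ) : ℂ) * τ + ((r - ‖τ‖ ^ 2 * p : ℝ) : ℂ) := by
    push_cast
    linear_combination (p : ℂ) * sq_sub_two_re_mul_add_sq_norm τ
  rw [hsplit, ofReal_mul_add_ofReal_eq_zero_iff hτ, add_eq_zero_iff_eq_neg, sub_eq_zero]
  constructor <;> rintro ⟨h1, h2⟩ <;> constructor <;> linarith

end Complex

open Complex

theorem ofReal_div_mul_eq_moebius_iff {a b : ℝ} (ha : a ≠ 0) (hb : b ≠ 0) {τ : ℂ}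
    (hτ : τ.im ≠ 0) {x y z w : ℝ} (hD : (y : ℂ) * τ + w ≠ 0) :
    (a / b : ℂ) * τ = (x * τ + z) / (y * τ + w) ↔
      z = -(a / b) * ‖τ‖ ^ 2 * y ∧ w = -2 * τ.re * y + (b / a) * x := by
  have hb' : (b : ℂ) ≠ 0 := ofReal_ne_zero.2 hb
  have hquad : (a / b : ℂ) * τ = (x * τ + z) / (y * τ + w) ↔
      ((a * y : ℝ) : ℂ) * τ ^ 2 + ((a * w - b * x : ℝ) : ℂ) * τ + ((-(b * z)) : ℝ) = 0 := by
    rw [eq_div_iff hD]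
    constructor <;> intro h
    · push_cast; field_simp at h; linear_combination h
    · push_cast at h; field_simp; linear_combination h
  rw [hquad, ofReal_quadratic_eq_zero_iff hτ]
  constructor <;> rintro ⟨h1, h2⟩ <;> constructor <;> field_simp at * <;> linarith

theorem det_eq_one_iff_quadratic {a b : ℝ} (ha : a ≠ 0) (hb : b ≠ 0) (t s : ℝ) {x y z w : ℝ}
    (hz : z = -(a / b) * s * y) (hw : w = -2 * t * y + (b / a) * x) :
    x * w - z * y = 1 ↔ b ^ 2 * x ^ 2 - 2 * (a * b) * t * (x * y) + a ^ 2 * s * y ^ 2 = a * b := by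
  have hab : a * b ≠ 0 := mul_ne_zero ha hb
  have hform : a * b * (x * w - z * y)
      = b ^ 2 * x ^ 2 - 2 * (a * b) * t * (x * y) + a ^ 2 * s * y ^ 2 := by
    subst hz hw; field_simp; ring
  rw [← hform, ← mul_right_inj' hab, mul_one]

theorem sl2_div_mul_eq_moebius_iff {a b : ℝ} (ha : a ≠ 0) (hb : b ≠ 0) {τ : ℂ} (hτ : τ.im ≠ 0)
    (x y z w : ℤ) :
    (x * w - z * y = 1 ∧ (a / b : ℂ) * τ = (x * τ + z) / (y * τ + w)) ↔
      b ^ 2 * x ^ 2 - 2 * (a * b) * τ.re * (x * y) + a ^ 2 * ‖τ‖ ^ 2 * y ^ 2 = a * b ∧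
      (z : ℝ) = -(a / b) * ‖τ‖ ^ 2 * y ∧ (w : ℝ) = -2 * τ.re * y + (b / a) * x := by
  have hmoebius (hdet : x * w - z * y = 1) :=
    ofReal_div_mul_eq_moebius_iff ha hb hτ (x := x) (y := y) (z := z) (w := w) <| by
      intro hD
      obtain ⟨hy, hw⟩ := (ofReal_mul_add_ofReal_eq_zero_iff hτ).1 (by exact_mod_cast hD)
      norm_cast at hy hw
      simp [hy, hw] at hdet
  constructor
  · rintro ⟨hdet, heq⟩
    obtain ⟨hz, hw⟩ := (hmoebius hdet).1 (by exact_mod_cast heq)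
    exact ⟨(det_eq_one_iff_quadratic ha hb _ _ hz hw).1 (by exact_mod_cast hdet), hz, hw⟩
  · rintro ⟨hq, hz, hw⟩
    have hdet : x * w - z * y = 1 := by
      exact_mod_cast (det_eq_one_iff_quadratic ha hb _ _ hz hw).2 hq
    exact ⟨hdet, by exact_mod_cast (hmoebius hdet).2 ⟨hz, hw⟩⟩

/-- Self-duality condition for duality defects of type `(m,i) = (0,0)` in the `c = 2`
compact boson CFT with moduli `(τ, ρ)`, under orbifolding by
`ℤ_{N₁} × ℤ_{N₂} × ℤ_{W₁} × ℤ_{W₂}`: the existence of the two `SL(2,ℤ)` elements is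
equivalent to integer solvability of two quadratic equations with integrality side
conditions; moreover the `SL(2,ℤ)` elements can be taken to be built from the solutions. -/
theorem duality_defects_zero_zero (N₁ N₂ W₁ W₂ : ℕ) (hN₁ : 0 < N₁) (hN₂ : 0 < N₂)
    (hW₁ : 0 < W₁) (hW₂ : 0 < W₂) (τ ρ : ℂ) (hτ : 0 < τ.im) (hρ : 0 < ρ.im) :
    ((∃ α β γ δ α' β' γ' δ' : ℤ,
        α * δ - β * γ = 1 ∧ α' * δ' - β' * γ' = 1 ∧
        ((N₁ * W₂ : ℂ) / (N₂ * W₁)) * τ = ((α : ℂ) * τ + β) / ((γ : ℂ) * τ + δ) ∧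
        ((W₁ * W₂ : ℂ) / (N₁ * N₂)) * ρ = ((α' : ℂ) * ρ + β') / ((γ' : ℂ) * ρ + δ')) ↔
      (∃ x₀ y₀ x₀' y₀' : ℤ,
        ((N₂ * W₁ : ℝ))^2 * x₀^2 - 2 * (N₁ * N₂ * W₁ * W₂ : ℝ) * τ.re * (x₀ * y₀)
            + ((N₁ * W₂ : ℝ))^2 * ‖τ‖^2 * y₀^2 = (N₁ * N₂ * W₁ * W₂ : ℝ) ∧
        ((N₁ * N₂ : ℝ))^2 * x₀'^2 - 2 * (N₁ * N₂ * W₁ * W₂ : ℝ) * ρ.re * (x₀' * y₀')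
            + ((W₁ * W₂ : ℝ))^2 * ‖ρ‖^2 * y₀'^2 = (N₁ * N₂ * W₁ * W₂ : ℝ) ∧
        (∃ z₀ : ℤ, (z₀ : ℝ) = -((N₁ * W₂ : ℝ) / (N₂ * W₁)) * ‖τ‖^2 * y₀) ∧
        (∃ w₀ : ℤ, (w₀ : ℝ) = -2 * τ.re * y₀ + ((N₂ * W₁ : ℝ) / (N₁ * W₂)) * x₀) ∧
        (∃ z₀' : ℤ, (z₀' : ℝ) = -((W₁ * W₂ : ℝ) / (N₁ * N₂)) * ‖ρ‖^2 * y₀') ∧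
        (∃ w₀' : ℤ, (w₀' : ℝ) = -2 * ρ.re * y₀' + ((N₁ * N₂ : ℝ) / (W₁ * W₂)) * x₀'))) ∧
    (∀ x₀ y₀ x₀' y₀' z₀ w₀ z₀' w₀' : ℤ,
        ((N₂ * W₁ : ℝ))^2 * x₀^2 - 2 * (N₁ * N₂ * W₁ * W₂ : ℝ) * τ.re * (x₀ * y₀)
            + ((N₁ * W₂ : ℝ))^2 * ‖τ‖^2 * y₀^2 = (N₁ * N₂ * W₁ * W₂ : ℝ) →
        ((N₁ * N₂ : ℝ))^2 * x₀'^2 - 2 * (N₁ * N₂ * W₁ * W₂ : ℝ) * ρ.re * (x₀' * y₀')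
            + ((W₁ * W₂ : ℝ))^2 * ‖ρ‖^2 * y₀'^2 = (N₁ * N₂ * W₁ * W₂ : ℝ) →
        (z₀ : ℝ) = -((N₁ * W₂ : ℝ) / (N₂ * W₁)) * ‖τ‖^2 * y₀ →
        (w₀ : ℝ) = -2 * τ.re * y₀ + ((N₂ * W₁ : ℝ) / (N₁ * W₂)) * x₀ →
        (z₀' : ℝ) = -((W₁ * W₂ : ℝ) / (N₁ * N₂)) * ‖ρ‖^2 * y₀' →
        (w₀' : ℝ) = -2 * ρ.re * y₀' + ((N₁ * N₂ : ℝ) / (W₁ * W₂)) * x₀' →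
        x₀ * w₀ - z₀ * y₀ = 1 ∧ x₀' * w₀' - z₀' * y₀' = 1 ∧
        ((N₁ * W₂ : ℂ) / (N₂ * W₁)) * τ = ((x₀ : ℂ) * τ + z₀) / ((y₀ : ℂ) * τ + w₀) ∧
        ((W₁ * W₂ : ℂ) / (N₁ * N₂)) * ρ = ((x₀' : ℂ) * ρ + z₀') / ((y₀' : ℂ) * ρ + w₀')) := by
  have hN₁' : (N₁ : ℝ) ≠ 0 := by exact_mod_cast hN₁.ne'
  have hN₂' : (N₂ : ℝ) ≠ 0 := by exact_mod_cast hN₂.ne'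
  have hW₁' : (W₁ : ℝ) ≠ 0 := by exact_mod_cast hW₁.ne'
  have hW₂' : (W₂ : ℝ) ≠ 0 := by exact_mod_cast hW₂.ne'
  have hτ' := sl2_div_mul_eq_moebius_iff (mul_ne_zero hN₁' hW₂') (mul_ne_zero hN₂' hW₁') hτ.ne'
  have hρ' := sl2_div_mul_eq_moebius_iff (mul_ne_zero hW₁' hW₂') (mul_ne_zero hN₁' hN₂') hρ.ne'
  simp only [show (N₁ * W₂ : ℝ) * (N₂ * W₁) = N₁ * N₂ * W₁ * W₂ by ring,
    show (W₁ * W₂ : ℝ) * (N₁ * N₂) = N₁ * N₂ * W₁ * W₂ by ring] at hτ' hρ'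
  push_cast at hτ' hρ'
  refine ⟨⟨?_, ?_⟩, ?_⟩
  · rintro ⟨α, β, γ, δ, α', β', γ', δ', hdet, hdet', heq, heq'⟩
    obtain ⟨hq, hβ, hδ⟩ := (hτ' α γ β δ).1 ⟨hdet, heq⟩
    obtain ⟨hq', hβ', hδ'⟩ := (hρ' α' γ' β' δ').1 ⟨hdet', heq'⟩
    exact ⟨α, γ, α', γ', hq, hq', ⟨β, hβ⟩, ⟨δ, hδ⟩, ⟨β', hβ'⟩, ⟨δ', hδ'⟩⟩
  · rintro ⟨x, y, x', y', hq, hq', ⟨z, hz⟩, ⟨w, hw⟩, ⟨z', hz'⟩, ⟨w', hw'⟩⟩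
    obtain ⟨hdet, heq⟩ := (hτ' x y z w).2 ⟨hq, hz, hw⟩
    obtain ⟨hdet', heq'⟩ := (hρ' x' y' z' w').2 ⟨hq', hz', hw'⟩
    exact ⟨x, z, y, w, x', z', y', w', hdet, hdet', heq, heq'⟩
  · intro x y x' y' z w z' w' hq hq' hz hw hz' hw'
    obtain ⟨hdet, heq⟩ := (hτ' x y z w).2 ⟨hq, hz, hw⟩
    obtain ⟨hdet', heq'⟩ := (hρ' x' y' z' w').2 ⟨hq', hz', hw'⟩
    exact ⟨hdet, hdet', heq, heq'⟩
end

section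
/- Let τ ∈ ℂ satisfy either (Re τ ≥ 0 and (Im τ)² > Re τ + 1/4) or (Re τ < 0 and (Im τ)² > −Re τ + 1/4). Then for any positive integers N₁, N₂, W₁, W₂, every integer solution (x, y) of the equation (N₁W₂/(N₂W₁))·x² − 2(Re τ)·x·y + (N₂W₁/(N₁W₂))·|τ|²·y² = 1 satisfies x = 0 or y = 0. -/
/-!
Write `A = N₁W₂/(N₂W₁)`, `B = ‖τ‖² / A` and `a = Re τ`. By AM-GM, `A x² + B y² ≥ 2‖τ‖ |x y|`,
so the left-hand side is at least `2 (‖τ‖ - |a|) |x y|`. The hypothesis on `τ` says exactly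
`(Im τ)² > |a| + 1/4`, i.e. `‖τ‖ > |a| + 1/2`; hence if `x y ≠ 0` then `|x y| ≥ 1` and the
left-hand side exceeds `1`.
-/

lemma Complex.abs_re_add_half_lt_norm {τ : ℂ} (h : |τ.re| + 1 / 4 < τ.im ^ 2) :
    |τ.re| + 1 / 2 < ‖τ‖ := by
  have hnorm : ‖τ‖ ^ 2 = τ.re ^ 2 + τ.im ^ 2 := by
    rw [Complex.sq_norm, Complex.normSq_apply]; ring
  have hsq : (|τ.re| + 1 / 2) ^ 2 < ‖τ‖ ^ 2 := by
    nlinarith [sq_abs τ.re]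
  exact lt_of_pow_lt_pow_left₀ 2 (norm_nonneg τ) hsq

lemma two_mul_abs_mul_le_of_mul_eq_sq {A B r x y : ℝ} (hA : 0 < A) (hAB : A * B = r ^ 2) :
    2 * r * |x * y| ≤ A * x ^ 2 + B * y ^ 2 := by
  have key : A * (A * x ^ 2 + B * y ^ 2 - 2 * r * |x * y|) = (A * |x| - r * |y|) ^ 2 := by
    rw [abs_mul]
    linear_combination y ^ 2 * hAB + A ^ 2 * (sq_abs x).symm + r ^ 2 * (sq_abs y).symm
  exact sub_nonneg.mp (nonneg_of_mul_nonneg_right (key ▸ sq_nonneg _) hA)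

lemma two_mul_sub_abs_mul_abs_le_quadratic {A B r a x y : ℝ} (hA : 0 < A)
    (hAB : A * B = r ^ 2) :
    2 * (r - |a|) * |x * y| ≤ A * x ^ 2 - 2 * a * (x * y) + B * y ^ 2 := by
  have hcross : a * (x * y) ≤ |a| * |x * y| := by
    rw [← abs_mul]; exact le_abs_self _
  linarith [two_mul_abs_mul_le_of_mul_eq_sq (x := x) (y := y) hA hAB]

lemma Int.one_le_abs_cast_mul {x y : ℤ} (hx : x ≠ 0) (hy : y ≠ 0) :
    1 ≤ |(x : ℝ) * y| := by
  exact_mod_cast Int.one_le_abs (mul_ne_zero hx hy)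

/-- Proposition 3.2: if `τ` lies in the indicated region (covering almost all of the
fundamental domain), then for any positive integers `N₁, N₂, W₁, W₂` every integer
solution of the duality-defect quadratic equation has `x = 0` or `y = 0`. -/
theorem integer_solutions_vanish (τ : ℂ)
    (hτ : (0 ≤ τ.re ∧ τ.im ^ 2 > τ.re + 1 / 4) ∨ (τ.re < 0 ∧ τ.im ^ 2 > -τ.re + 1 / 4))
    (N₁ N₂ W₁ W₂ : ℕ) (hN₁ : 0 < N₁) (hN₂ : 0 < N₂) (hW₁ : 0 < W₁) (hW₂ : 0 < W₂)
    (x y : ℤ)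
    (hxy : ((N₁ * W₂ : ℝ) / (N₂ * W₁)) * x ^ 2 - 2 * τ.re * (x * y)
        + ((N₂ * W₁ : ℝ) / (N₁ * W₂)) * ‖τ‖ ^ 2 * y ^ 2 = 1) :
    x = 0 ∨ y = 0 := by
  by_contra! hxy0
  have hre : |τ.re| + 1 / 2 < ‖τ‖ := by
    refine Complex.abs_re_add_half_lt_norm ?_
    rcases hτ with ⟨hnonneg, him⟩ | ⟨hneg, him⟩
    · rwa [abs_of_nonneg hnonneg]
    · rwa [abs_of_neg hneg]
  have hA : (0 : ℝ) < (N₁ * W₂ : ℝ) / (N₂ * W₁) := by positivity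
  have hAB : (N₁ * W₂ : ℝ) / (N₂ * W₁) * ((N₂ * W₁ : ℝ) / (N₁ * W₂) * ‖τ‖ ^ 2)
      = ‖τ‖ ^ 2 := by
    field_simp
  have hbound := two_mul_sub_abs_mul_abs_le_quadratic (a := τ.re) (x := x) (y := y) hA hAB
  have hgt : 1 < 2 * (‖τ‖ - |τ.re|) * |(x : ℝ) * y| :=
    one_lt_mul_of_lt_of_le (by linarith) (Int.one_le_abs_cast_mul hxy0.1 hxy0.2)
  linarith
end

section
/- Let N₁, N₂, W₁, W₂ be positive integers, let τ ∈ ℂ with Im τ ≠ 0, and set r = N₁W₂/(N₂W₁). Suppose α, β, γ, δ are real numbers with γ ≠ 0, r·τ·(γτ + δ) = ατ + β, and αδ − βγ = 1. Then (N₂W₁)²α² − 2N₁N₂W₁W₂(Re τ)αγ + (N₁W₂)²|τ|²γ² = N₁N₂W₁W₂. -/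
/-!
Since the coefficients are real, the relation `r τ (γτ + δ) = ατ + β` is a real quadratic equation
`rγ τ² + (rδ - α) τ - β = 0` with the non-real root `τ`; its other root is `conj τ`, so
`rδ - α = -2rγ Re τ` and `-β = rγ |τ|²`. Substituting these into `α² - 2r Re τ αγ + r² |τ|² γ²`
gives `r (αδ - βγ) = r`, and clearing the denominator of `r` yields the theorem.
-/

open Complex

theorem quadratic_coeffs_eq_of_im_ne_zero {a b c : ℝ} {τ : ℂ} (hτ : τ.im ≠ 0)
    (h : (a : ℂ) * τ ^ 2 + b * τ + c = 0) :
    b = -2 * a * τ.re ∧ c = a * ‖τ‖ ^ 2 := by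
  rw [Complex.sq_norm, normSq_apply]
  have hre := congrArg re h
  have him := congrArg im h
  simp only [add_re, add_im, mul_re, mul_im, ofReal_re, ofReal_im, sq, zero_re, zero_im] at hre him
  have hb : b = -2 * a * τ.re := mul_left_cancel₀ hτ (by linear_combination him)
  exact ⟨hb, by linear_combination hre - τ.re * hb⟩

theorem scaled_quadratic_form_eq_of_det_eq_one {r α β γ δ : ℝ} {τ : ℂ} (hτ : τ.im ≠ 0)
    (h : (r : ℂ) * τ * (γ * τ + δ) = α * τ + β) (hdet : α * δ - β * γ = 1) :
    α ^ 2 - 2 * r * τ.re * (α * γ) + r ^ 2 * ‖τ‖ ^ 2 * γ ^ 2 = r := by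
  obtain ⟨hlin, hconst⟩ := quadratic_coeffs_eq_of_im_ne_zero (a := r * γ) (b := r * δ - α)
    (c := -β) hτ (by push_cast; linear_combination h)
  linear_combination r * hdet - α * hlin - r * γ * hconst

theorem quadratic_from_unit_det_general (N₁ N₂ W₁ W₂ : ℕ) (hN₂ : 0 < N₂)
    (hW₁ : 0 < W₁) (τ : ℂ) (hτ : τ.im ≠ 0)
    (α β γ δ : ℝ)
    (h : (((N₁ * W₂ : ℝ) / (N₂ * W₁) : ℝ) : ℂ) * τ * ((γ : ℂ) * τ + (δ : ℂ))
        = (α : ℂ) * τ + (β : ℂ))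
    (hdet : α * δ - β * γ = 1) :
    ((N₂ * W₁ : ℝ))^2 * α^2 - 2 * (N₁ * N₂ * W₁ * W₂ : ℝ) * τ.re * (α * γ)
        + ((N₁ * W₂ : ℝ))^2 * ‖τ‖^2 * γ^2 = (N₁ * N₂ * W₁ * W₂ : ℝ) := by
  have hB : (N₂ * W₁ : ℝ) ≠ 0 := by positivity
  have key := scaled_quadratic_form_eq_of_det_eq_one hτ h hdet
  field_simp at key
  linear_combination key

/-- With `r = N₁W₂/(N₂W₁)`, if `γ ≠ 0`, `r·τ·(γτ + δ) = ατ + β` and `αδ - βγ = 1`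
(real `α, β, γ, δ`), then `(N₂W₁)²α² - 2N₁N₂W₁W₂(Re τ)αγ + (N₁W₂)²|τ|²γ² = N₁N₂W₁W₂`. -/
theorem quadratic_from_unit_det (N₁ N₂ W₁ W₂ : ℕ) (hN₁ : 0 < N₁) (hN₂ : 0 < N₂)
    (hW₁ : 0 < W₁) (hW₂ : 0 < W₂) (τ : ℂ) (hτ : τ.im ≠ 0)
    (α β γ δ : ℝ) (hγ : γ ≠ 0)
    (h : (((N₁ * W₂ : ℝ) / (N₂ * W₁) : ℝ) : ℂ) * τ * ((γ : ℂ) * τ + (δ : ℂ))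
        = (α : ℂ) * τ + (β : ℂ))
    (hdet : α * δ - β * γ = 1) :
    ((N₂ * W₁ : ℝ))^2 * α^2 - 2 * (N₁ * N₂ * W₁ * W₂ : ℝ) * τ.re * (α * γ)
        + ((N₁ * W₂ : ℝ))^2 * ‖τ‖^2 * γ^2 = (N₁ * N₂ * W₁ * W₂ : ℝ) :=
  quadratic_from_unit_det_general N₁ N₂ W₁ W₂ hN₂ hW₁ τ hτ α β γ δ h hdet
end

section
/- Let a > 0 be a real number and let x, y be integers satisfying a·x² + x·y + (1/a)·y² = 1. Then x·y ∈ {−1, 0}; moreover, if x·y = −1 then a = 1 and (x, y) = (1, −1) or (x, y) = (−1, 1). -/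
/-- Classification of integer solutions at the exceptional point `τ = e^{2πi/3}`:
if `a > 0` and integers `x, y` satisfy `a·x² + x·y + (1/a)·y² = 1`, then
`x·y ∈ {-1, 0}`; and if `x·y = -1` then `a = 1` and `(x, y) = (1, -1)` or `(-1, 1)`. -/
theorem exceptional_point_solutions (a : ℝ) (ha : 0 < a) (x y : ℤ)
    (h : a * (x : ℝ) ^ 2 + (x : ℝ) * (y : ℝ) + (1 / a) * (y : ℝ) ^ 2 = 1) :
    (x * y = -1 ∨ x * y = 0) ∧
      (x * y = -1 → a = 1 ∧ ((x, y) = (1, -1) ∨ (x, y) = (-1, 1))) := by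
  have hane : a ≠ 0 := ha.ne'
  have h' : a ^ 2 * (x:ℝ) ^ 2 + a * ((x:ℝ) * y) + (y:ℝ) ^ 2 = a := by
    have := congrArg (· * a) h
    field_simp at this
    linarith
  constructor
  · rcases lt_trichotomy (x * y) 0 with hn | h0 | hp
    · left
      by_contra hne
      have h2 : x * y ≤ -2 := by omega
      have h2' : ((x:ℝ) * y) ≤ -2 := by exact_mod_cast h2
      nlinarith [sq_nonneg (a * x + y), sq_nonneg ((x:ℝ)), sq_nonneg ((y:ℝ)), mul_pos ha ha]
    · right; exact h0
    · exfalso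
      have hp' : (1:ℝ) ≤ (x:ℝ) * y := by exact_mod_cast hp
      nlinarith [sq_nonneg (a * x - y), sq_nonneg ((x:ℝ)), sq_nonneg ((y:ℝ)), mul_pos ha ha]
  · intro hm
    have hcase : (x = 1 ∧ y = -1) ∨ (x = -1 ∧ y = 1) := by
      have hx : x = 1 ∨ x = -1 := by
        rcases Int.isUnit_iff.mp (IsUnit.of_mul_eq_one (a := x) (-y) (by linarith [hm])) with h1 | h1
        · exact Or.inl h1
        · exact Or.inr h1
      rcases hx with h1 | h1
      · subst h1; exact Or.inl ⟨rfl, by omega⟩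
      · subst h1; exact Or.inr ⟨rfl, by omega⟩
    have ha1 : a = 1 := by
      rcases hcase with ⟨hx, hy⟩ | ⟨hx, hy⟩ <;> subst hx <;> subst hy <;>
        push_cast at h' <;> nlinarith [sq_nonneg (a - 1)]
    refine ⟨ha1, ?_⟩
    rcases hcase with ⟨hx, hy⟩ | ⟨hx, hy⟩
    · left; simp [hx, hy]
    · right; simp [hx, hy]
end

section
/- Let t > √3/2 be a real number and let N₁, N₂, W₁, W₂ be positive integers. Then every integer solution (x, y) of (N₁N₂)²·x² − N₁N₂W₁W₂·x·y + ((1 + 4t²)/4)·(W₁W₂)²·y² = N₁N₂W₁W₂ satisfies x = 0 or y = 0. -/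
private lemma multicritical_aux (t a b u v : ℝ) (ht2 : t ^ 2 > 3 / 4)
    (ha : 1 ≤ a) (hb : 1 ≤ b) (hv : 1 ≤ v ^ 2)
    (huv : u * v ≤ -1 ∨ 1 ≤ u * v)
    (heq : a ^ 2 * u ^ 2 - a * b * (u * v) + ((1 + 4 * t ^ 2) / 4) * b ^ 2 * v ^ 2 = a * b) :
    False := by
  have hab : (1:ℝ) ≤ a * b := by nlinarith
  have hpos : (0:ℝ) < (t ^ 2 - 3 / 4) * (b ^ 2 * v ^ 2) := by
    apply mul_pos (by linarith); nlinarith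
  rcases huv with hc | hc
  · have h1 : a * b ≤ a * b * (-(u * v)) :=
      le_mul_of_one_le_right (by linarith) (by linarith)
    nlinarith [sq_nonneg (a * u), sq_nonneg (b * v)]
  · have h1 : a * b ≤ a * b * (u * v) :=
      le_mul_of_one_le_right (by linarith) hc
    nlinarith [sq_nonneg (a * u - b * v)]

/-- The `ρ`-equation at the multicritical line `(τ, ρ) = (it, 1/2 + it)`: for `t > √3/2`
every integer solution of
`(N₁N₂)²x² - N₁N₂W₁W₂·xy + ((1+4t²)/4)(W₁W₂)²y² = N₁N₂W₁W₂` has `x = 0` or `y = 0`. -/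
theorem multicritical_rho_equation_solutions (t : ℝ) (ht : t > Real.sqrt 3 / 2)
    (N₁ N₂ W₁ W₂ : ℕ) (hN₁ : 0 < N₁) (hN₂ : 0 < N₂) (hW₁ : 0 < W₁) (hW₂ : 0 < W₂)
    (x y : ℤ)
    (hxy : ((N₁ * N₂ : ℝ))^2 * x^2 - (N₁ * N₂ * W₁ * W₂ : ℝ) * (x * y)
        + ((1 + 4 * t^2) / 4) * ((W₁ * W₂ : ℝ))^2 * y^2 = (N₁ * N₂ * W₁ * W₂ : ℝ)) :
    x = 0 ∨ y = 0 := by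
  by_contra h
  push_neg at h
  obtain ⟨hx, hy⟩ := h
  have ht2 : t ^ 2 > 3 / 4 := by
    have h3 : Real.sqrt 3 / 2 ≥ 0 := by positivity
    have := Real.sq_sqrt (by norm_num : (3:ℝ) ≥ 0)
    nlinarith [mul_self_nonneg (t - Real.sqrt 3 / 2)]
  have hy1 : (1:ℤ) ≤ y ^ 2 := by
    have := Int.one_le_abs hy
    nlinarith [sq_abs y]
  have hA : (1:ℝ) ≤ (N₁:ℝ) * (N₂:ℝ) := by
    have h1 : (1:ℝ) ≤ (N₁:ℝ) := by exact_mod_cast hN₁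
    have h2 : (1:ℝ) ≤ (N₂:ℝ) := by exact_mod_cast hN₂
    nlinarith
  have hB : (1:ℝ) ≤ (W₁:ℝ) * (W₂:ℝ) := by
    have h1 : (1:ℝ) ≤ (W₁:ℝ) := by exact_mod_cast hW₁
    have h2 : (1:ℝ) ≤ (W₂:ℝ) := by exact_mod_cast hW₂
    nlinarith
  have hxyI : x * y ≤ -1 ∨ 1 ≤ x * y := by
    rcases (mul_ne_zero hx hy).lt_or_gt with h | h
    · left; linarith
    · right; linarith
  refine multicritical_aux t ((N₁:ℝ) * (N₂:ℝ)) ((W₁:ℝ) * (W₂:ℝ)) (x:ℝ) (y:ℝ) ht2 hA hB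
    (by exact_mod_cast hy1) ?_ ?_
  · rcases hxyI with hc | hc
    · left; exact_mod_cast hc
    · right; exact_mod_cast hc
  · linear_combination hxy
end
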